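/- Suppose f: {0,1}^n → {0,1} satisfies δ·E[f(N_α)] - ε' ≥ E[f(U)] with ε' > 0 and 0 < δ. Then q := E[f(N_α)] ≥ ε'/δ, and choosing ℓ = ⌈1/q⌉ ≤ ⌈δ/ε'⌉, the random function F(z) = OR_{i∈[ℓ]} f(ρ_i(z)), where the ρ_i are independent uniformly random permutations of the n coordinates, satisfies: Pr over F and z ~ N_α that F(z) = 0 is at most e^{-1}, and Pr over F and z ~ U that F(z) = 1 is at most 2δ. Consequently, if δ < 1/4, some fixed function in the support of F distinguishes N_α from U with advantage at least 1 - e^{-1} - 2δ > 0. -/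

import Mathlib

open Finset

noncomputable section

/-- Real value of a boolean. -/
def bval (b : Bool) : ℝ := if b then 1 else 0

/-- Expectation of a boolean test under a (finitely supported) distribution on `{0,1}^n`. -/
def Ex {n : ℕ} (μ : (Fin n → Bool) → ℝ) (f : (Fin n → Bool) → Bool) : ℝ :=
  ∑ z : Fin n → Bool, μ z * bval (f z)

/-- `μ` is a probability distribution on `{0,1}^n`. -/
def IsDist {n : ℕ} (μ : (Fin n → Bool) → ℝ) : Prop :=
  (∀ z, 0 ≤ μ z) ∧ ∑ z : Fin n → Bool, μ z = 1

/-- The uniform distribution on `{0,1}^n`. -/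
def uni (n : ℕ) : (Fin n → Bool) → ℝ := fun _ => 1 / 2 ^ n

/-- The biased-coin product distribution `N_α`: each bit is 1 with probability `1/2 - α`. -/
def coin (n : ℕ) (α : ℝ) : (Fin n → Bool) → ℝ :=
  fun z => ∏ i : Fin n, if z i then (1/2 - α : ℝ) else (1/2 + α)

/-- Hamming weight. -/
def wt {m : ℕ} (z : Fin m → Bool) : ℕ := (Finset.univ.filter fun i => z i = true).card

/-- Binary entropy function (base 2). -/
def hbin (x : ℝ) : ℝ := -(x * Real.logb 2 x + (1 - x) * Real.logb 2 (1 - x))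

/-- `IsDT k f`: `f` is computed by a decision tree of depth at most `k`. -/
inductive IsDT {n : ℕ} : ℕ → ((Fin n → Bool) → Bool) → Prop
  | const (k : ℕ) (b : Bool) : IsDT k (fun _ => b)
  | node {k : ℕ} {g h : (Fin n → Bool) → Bool} (i : Fin n)
      (hg : IsDT k g) (hh : IsDT k h)
      (hgi : ∀ z b, g (Function.update z i b) = g z)
      (hhi : ∀ z b, h (Function.update z i b) = h z) :
      IsDT (k + 1) (fun z => if z i then h z else g z)

/-- The random-restriction distribution `R_p`: each coordinate is unset (`none`)
with probability `p`, else a uniform bit. -/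
def Rp (n : ℕ) (p : ℝ) : (Fin n → Option Bool) → ℝ :=
  fun ρ => ∏ i : Fin n, Option.elim (ρ i) p (fun _ => (1 - p) / 2)

/-- Composition of a restriction with an input: unset coordinates are filled from `z`. -/
def compR {n : ℕ} (ρ : Fin n → Option Bool) (z : Fin n → Bool) : Fin n → Bool :=
  fun i => (ρ i).getD (z i)

/-- The hamSlice of `{0,1}^m` of Hamming weight exactly `w`. -/
def hamSlice (m w : ℕ) : Finset (Fin m → Bool) :=
  Finset.univ.filter fun z => wt z = w


/-!
Let `q = E[f(N_α)]` and `p = E[f(U)]`. The hypothesis gives `ε' ≤ δ q` and `p ≤ δ q`, so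
`q ≥ ε'/δ`. Over `ℓ` independent samples the OR of `f` rejects with probability exactly
`(1 - q)^ℓ ≤ e^{-qℓ} ≤ e^{-1}` under `N_α`, and accepts with probability
`1 - (1 - p)^ℓ ≤ ℓ p ≤ (2/q) · δ q = 2δ` under `U` (Bernoulli's inequality and `⌈1/q⌉ ≤ 2/q`).
-/

open Real

section IidSamples

variable {X : Type*} [Fintype X] (μ : X → ℝ) (f : X → Bool) (ℓ : ℕ)

lemma sum_pi_prod_mul_ite_forall :
    ∑ x : Fin ℓ → X, (∏ i, μ (x i)) * (if ∀ i, f (x i) = false then (1 : ℝ) else 0) =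
      (∑ z, μ z * if f z = false then 1 else 0) ^ ℓ := by
  classical
  rw [← Fin.prod_const, Fintype.prod_sum]
  refine sum_congr rfl fun x _ => ?_
  rw [prod_mul_distrib, prod_boole]
  simp only [mem_univ, true_implies]

lemma sum_pi_prod_mul_ite_exists :
    ∑ x : Fin ℓ → X, (∏ i, μ (x i)) * (if ∃ i, f (x i) = true then (1 : ℝ) else 0) =
      (∑ z, μ z) ^ ℓ - (∑ z, μ z * if f z = false then 1 else 0) ^ ℓ := by
  classical
  have h_sum_prod : ∑ x : Fin ℓ → X, ∏ i, μ (x i) = (∑ z, μ z) ^ ℓ := by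
    rw [← Fin.prod_const, Fintype.prod_sum]
  rw [← h_sum_prod, ← sum_pi_prod_mul_ite_forall, ← sum_sub_distrib]
  refine sum_congr rfl fun x _ => ?_
  by_cases h : ∃ i, f (x i) = true
  · have h' : ¬ ∀ i, f (x i) = false := by simpa using h
    simp [h, h']
  · have h' : ∀ i, f (x i) = false := by simpa using h
    simp [h']

end IidSamples

lemma bval_add_ite_eq_false (b : Bool) : bval b + (if b = false then 1 else 0) = 1 := by
  cases b <;> simp [bval]

lemma bval_nonneg (b : Bool) : 0 ≤ bval b := by
  cases b <;> simp [bval]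

lemma bval_le_one (b : Bool) : bval b ≤ 1 := by
  cases b <;> simp [bval]

lemma isDist_uni (n : ℕ) : IsDist (uni n) := by
  refine ⟨fun _ => by unfold uni; positivity, ?_⟩
  simp [uni]

lemma isDist_coin (n : ℕ) {α : ℝ} (hα_lower : -(1 / 2) ≤ α) (hα_upper : α ≤ 1 / 2) :
    IsDist (coin n α) := by
  refine ⟨fun z => prod_nonneg fun i _ => ?_, ?_⟩
  · split_ifs <;> linarith
  · simp only [coin]
    rw [← Fintype.prod_sum fun (_ : Fin n) (b : Bool) => if b then 1 / 2 - α else 1 / 2 + α]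
    norm_num

namespace IsDist

variable {n : ℕ} {μ : (Fin n → Bool) → ℝ} (hμ : IsDist μ) (f : (Fin n → Bool) → Bool)
include hμ

lemma Ex_nonneg : 0 ≤ Ex μ f :=
  sum_nonneg fun z _ => mul_nonneg (hμ.1 z) (bval_nonneg _)

lemma Ex_le_one : Ex μ f ≤ 1 :=
  hμ.2 ▸ sum_le_sum fun z _ => mul_le_of_le_one_right (hμ.1 z) (bval_le_one _)

lemma sum_mul_ite_eq_false : ∑ z, μ z * (if f z = false then 1 else 0) = 1 - Ex μ f := by
  rw [eq_sub_iff_add_eq, Ex, ← sum_add_distrib]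
  refine (sum_congr rfl fun z _ => ?_).trans hμ.2
  rw [← mul_add, add_comm, bval_add_ite_eq_false, mul_one]

lemma sum_pi_prod_mul_ite_forall (ℓ : ℕ) :
    ∑ x : Fin ℓ → Fin n → Bool, (∏ i, μ (x i)) * (if ∀ i, f (x i) = false then (1 : ℝ) else 0) =
      (1 - Ex μ f) ^ ℓ := by
  rw [_root_.sum_pi_prod_mul_ite_forall, hμ.sum_mul_ite_eq_false]

lemma sum_pi_prod_mul_ite_exists (ℓ : ℕ) :
    ∑ x : Fin ℓ → Fin n → Bool, (∏ i, μ (x i)) * (if ∃ i, f (x i) = true then (1 : ℝ) else 0) =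
      1 - (1 - Ex μ f) ^ ℓ := by
  rw [_root_.sum_pi_prod_mul_ite_exists, hμ.sum_mul_ite_eq_false, hμ.2, one_pow]

end IsDist

lemma one_sub_pow_le_exp_neg_one {q : ℝ} {ℓ : ℕ} (hq : q ≤ 1) (hqℓ : 1 ≤ ℓ * q) :
    (1 - q) ^ ℓ ≤ exp (-1) :=
  calc (1 - q) ^ ℓ ≤ exp (-q) ^ ℓ :=
        pow_le_pow_left₀ (sub_nonneg.2 hq) (one_sub_le_exp_neg q) ℓ
    _ = exp (-(ℓ * q)) := by rw [← exp_nat_mul, mul_neg]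
    _ ≤ exp (-1) := exp_le_exp.2 (neg_le_neg hqℓ)

lemma one_sub_one_sub_pow_le_mul {p : ℝ} (hp : p ≤ 2) (ℓ : ℕ) : 1 - (1 - p) ^ ℓ ≤ ℓ * p := by
  have := one_add_mul_le_pow (a := -p) (by linarith) ℓ
  rw [← sub_eq_add_neg] at this
  linarith

lemma one_le_ceil_one_div_mul {q : ℝ} (hq : 0 < q) : 1 ≤ (⌈1 / q⌉₊ : ℝ) * q := by
  rw [← div_le_iff₀ hq]
  exact Nat.le_ceil _

lemma ceil_one_div_le_two_div {q : ℝ} (hq : 0 < q) (hq_le : q ≤ 1) :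
    (⌈1 / q⌉₊ : ℝ) ≤ 2 / q := by
  have h_one_le : 1 ≤ 1 / q := one_le_one_div hq hq_le
  have h_two_div : 2 / q = 1 / q + 1 / q := by ring
  linarith [(Nat.ceil_lt_add_one (zero_le_one.trans h_one_le)).le]

/-- error reduction. If `f` refutes `(ε', δ)`-pseudodensity of `N_α`,
then `q = E[f(N_α)] ≥ ε'/δ`, and with `ℓ = ⌈1/q⌉` i.i.d. copies, the OR of `f` on the
copies rejects `ℓ` i.i.d. samples of `N_α` with probability at most `e⁻¹`, accepts
`ℓ` i.i.d. uniform samples with probability at most `2δ`, and hence (for `δ < 1/4`)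
distinguishes the product distributions with advantage at least `1 - e⁻¹ - 2δ`. -/
theorem error_reduction_distinguisher {n : ℕ}
    (α ε' δ : ℝ) (hα0 : 0 ≤ α) (hα2 : α ≤ 1 / 2)
    (hε' : 0 < ε') (hδ : 0 < δ)
    (f : (Fin n → Bool) → Bool)
    (hf : δ * Ex (coin n α) f - ε' ≥ Ex (uni n) f) :
    ε' / δ ≤ Ex (coin n α) f ∧
    Nat.ceil (1 / Ex (coin n α) f) ≤ Nat.ceil (δ / ε') ∧
    (∑ x : Fin (Nat.ceil (1 / Ex (coin n α) f)) → Fin n → Bool,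
        (∏ i, coin n α (x i)) * (if ∀ i, f (x i) = false then (1 : ℝ) else 0)) ≤
      Real.exp (-1) ∧
    (∑ x : Fin (Nat.ceil (1 / Ex (coin n α) f)) → Fin n → Bool,
        (∏ i, uni n (x i)) * (if ∃ i, f (x i) = true then (1 : ℝ) else 0)) ≤ 2 * δ ∧
    (δ < 1 / 4 →
      |(∑ x : Fin (Nat.ceil (1 / Ex (coin n α) f)) → Fin n → Bool,
          (∏ i, coin n α (x i)) * (if ∃ i, f (x i) = true then (1 : ℝ) else 0)) -
        (∑ x : Fin (Nat.ceil (1 / Ex (coin n α) f)) → Fin n → Bool,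
          (∏ i, uni n (x i)) * (if ∃ i, f (x i) = true then (1 : ℝ) else 0))| ≥
        1 - Real.exp (-1) - 2 * δ) := by
  have hN := isDist_coin n (by linarith) hα2
  have hU := isDist_uni n
  set q := Ex (coin n α) f
  set p := Ex (uni n) f
  have hp0 := hU.Ex_nonneg f
  have hq_ge : ε' / δ ≤ q := by rw [div_le_iff₀ hδ]; linarith
  have hq0 : 0 < q := (div_pos hε' hδ).trans_le hq_ge
  have hq1 := hN.Ex_le_one f
  set ℓ := ⌈1 / q⌉₊
  have h_reject : (1 - q) ^ ℓ ≤ exp (-1) :=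
    one_sub_pow_le_exp_neg_one hq1 (one_le_ceil_one_div_mul hq0)
  have h_accept : 1 - (1 - p) ^ ℓ ≤ 2 * δ :=
    calc 1 - (1 - p) ^ ℓ ≤ ℓ * p :=
          one_sub_one_sub_pow_le_mul (by linarith [hU.Ex_le_one f]) ℓ
      _ ≤ 2 / q * (δ * q) :=
          mul_le_mul (ceil_one_div_le_two_div hq0 hq1) (by linarith) hp0 (by positivity)
      _ = 2 * δ := by field_simp
  rw [hN.sum_pi_prod_mul_ite_forall, hU.sum_pi_prod_mul_ite_exists, hN.sum_pi_prod_mul_ite_exists]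
  refine ⟨hq_ge, Nat.ceil_le_ceil ?_, h_reject, h_accept, fun _ => ?_⟩
  · rw [div_le_div_iff₀ hq0 hε']; linarith
  · linarith [le_abs_self (1 - (1 - q) ^ ℓ - (1 - (1 - p) ^ ℓ))]
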